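/- arXiv:2007.13397 — 8 statements merged into one kernel-verified Lean document; each statement's English description precedes it below -/
import Mathlib

section
/- Let A be a commutative Artinian local ring with maximal ideal 𝔪 and residue field F, let n = n₁ + ⋯ + n_r be a partition of n into positive integers, and let g ∈ GL_n(A) be such that its entrywise reduction ḡ ∈ GL_n(F) is block diagonal with diagonal blocks X₁ ∈ GL_{n₁}(F), …, X_r ∈ GL_{n_r}(F) whose characteristic polynomials are pairwise coprime in F[X]. Then there exists γ ∈ GL_n(A) with γ ≡ 1 (mod 𝔪) entrywise such that γ⁻¹ g γ is block diagonal, i.e., all entries of γ⁻¹ g γ outside the r diagonal blocks of sizes n₁, …, n_r vanish. -/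
open IsLocalRing Polynomial

private lemma pow_entries_mem {R ι : Type*} [CommRing R] [Fintype ι] [DecidableEq ι]
    (I : Ideal R) (M : Matrix ι ι R) (h : ∀ i j, M i j ∈ I) :
    ∀ k i j, (M ^ k) i j ∈ I ^ k := by
  intro k
  induction k with
  | zero => intro i j; simp
  | succ k ih =>
    intro i j
    rw [pow_succ, pow_succ, Matrix.mul_apply]
    exact Submodule.sum_mem _ fun z _ => Ideal.mul_mem_mul (ih i z) (h z j)

private def bdAlgHom {o : Type*} [Fintype o] [DecidableEq o] {m' : o → Type*}
    [∀ i, Fintype (m' i)] [∀ i, DecidableEq (m' i)] (α : Type*) [CommSemiring α] :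
    (∀ i, Matrix (m' i) (m' i) α) →ₐ[α] Matrix ((Σ i, m' i)) ((Σ i, m' i)) α :=
  { Matrix.blockDiagonal'RingHom m' α with
    commutes' := fun a => by
      show Matrix.blockDiagonal' _ = _
      have h1 : (algebraMap α (∀ i, Matrix (m' i) (m' i) α) a) =
          fun i => Matrix.diagonal (fun _ => a) := by
        funext i
        simp [Matrix.algebraMap_eq_diagonal]
      rw [h1, Matrix.blockDiagonal'_diagonal, Matrix.algebraMap_eq_diagonal]
      rfl }

private lemma mapMatrix_aeval {A F ι : Type*} [CommRing A] [CommRing F] [Fintype ι]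
    [DecidableEq ι] (φ : A →+* F) (G : Matrix ι ι A) (f : Polynomial A) :
    φ.mapMatrix (Polynomial.aeval G f) = Polynomial.aeval (φ.mapMatrix G) (f.map φ) := by
  have hcomp : (RingHom.mapMatrix (m := ι) φ).comp (algebraMap A (Matrix ι ι A)) =
      (algebraMap F (Matrix ι ι F)).comp φ := by
    refine RingHom.ext fun a => ?_
    ext i j
    simp [Matrix.algebraMap_matrix_apply, RingHom.mapMatrix_apply, Matrix.map_apply,
      apply_ite φ]
  rw [Polynomial.aeval_def, Polynomial.aeval_def, Polynomial.eval₂_map, Polynomial.hom_eval₂,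
    hcomp]

/-- Over an Artinian local ring, a matrix whose reduction is block diagonal with blocks
having pairwise coprime characteristic polynomials can be conjugated, by a matrix congruent
to the identity modulo the maximal ideal, into block diagonal form. -/
theorem block_diagonalization
    {A : Type*} [CommRing A] [IsArtinianRing A] [IsLocalRing A]
    {r : ℕ} (n : Fin r → ℕ) (hn : ∀ i, 0 < n i)
    (g : GL ((i : Fin r) × Fin (n i)) A)
    (hblock : ∀ x y : (i : Fin r) × Fin (n i), x.1 ≠ y.1 →
      residue A ((g : Matrix ((i : Fin r) × Fin (n i)) ((i : Fin r) × Fin (n i)) A) x y) = 0)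
    (hcoprime : ∀ i j : Fin r, i ≠ j →
      IsCoprime
        (Matrix.charpoly (Matrix.of fun a b : Fin (n i) =>
          residue A ((g : Matrix ((i : Fin r) × Fin (n i)) ((i : Fin r) × Fin (n i)) A) ⟨i, a⟩ ⟨i, b⟩)))
        (Matrix.charpoly (Matrix.of fun a b : Fin (n j) =>
          residue A ((g : Matrix ((i : Fin r) × Fin (n i)) ((i : Fin r) × Fin (n i)) A) ⟨j, a⟩ ⟨j, b⟩)))) :
    ∃ γ : GL ((i : Fin r) × Fin (n i)) A,
      (∀ x y : (i : Fin r) × Fin (n i),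
        (γ : Matrix ((i : Fin r) × Fin (n i)) ((i : Fin r) × Fin (n i)) A) x y
          - (1 : Matrix ((i : Fin r) × Fin (n i)) ((i : Fin r) × Fin (n i)) A) x y
            ∈ maximalIdeal A) ∧
      (∀ x y : (i : Fin r) × Fin (n i), x.1 ≠ y.1 →
        ((γ⁻¹ * g * γ : GL ((i : Fin r) × Fin (n i)) A) :
          Matrix ((i : Fin r) × Fin (n i)) ((i : Fin r) × Fin (n i)) A) x y = 0) := by
  classical
  set ι := ((i : Fin r) × Fin (n i)) with hι
  let F := ResidueField A
  let G : Matrix ι ι A := (g : Matrix ι ι A)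
  let Φ : Matrix ι ι A →+* Matrix ι ι F := (residue A).mapMatrix
  let X : ∀ i, Matrix (Fin (n i)) (Fin (n i)) F :=
    fun i => Matrix.of fun a b => residue A (G ⟨i, a⟩ ⟨i, b⟩)
  have hG : Φ G = Matrix.blockDiagonal' X := by
    ext x y
    rw [Matrix.blockDiagonal'_apply]
    by_cases h : x.1 = y.1
    · rw [dif_pos h]
      obtain ⟨xi, xa⟩ := x
      obtain ⟨yi, ya⟩ := y
      cases h
      rfl
    · rw [dif_neg h]
      exact hblock x y h
  -- CRT idempotent polynomials over the residue field
  let p : ∀ i, Polynomial F := fun i => (X i).charpoly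
  have hcop : ∀ i j, i ≠ j → IsCoprime (p i) (p j) := hcoprime
  have hq' : ∀ i : Fin r, ∃ q : Polynomial F,
      ∀ j, Polynomial.aeval (X j) q = if j = i then 1 else 0 := by
    intro i
    have h1 : IsCoprime (p i) (∏ j ∈ Finset.univ.erase i, p j) :=
      IsCoprime.prod_right fun j hj => hcop i j (Finset.ne_of_mem_erase hj).symm
    obtain ⟨u, v, huv⟩ := h1
    refine ⟨v * ∏ j ∈ Finset.univ.erase i, p j, fun j => ?_⟩
    by_cases h : j = i
    · subst h
      rw [if_pos rfl]
      have h2 : v * ∏ k ∈ Finset.univ.erase j, p k = 1 - u * p j := by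
        linear_combination huv
      rw [h2, map_sub, map_one, map_mul, (X j).aeval_self_charpoly, mul_zero, sub_zero]
    · rw [if_neg h]
      obtain ⟨c, hc⟩ := Finset.dvd_prod_of_mem p
        (Finset.mem_erase.mpr ⟨h, Finset.mem_univ j⟩)
      rw [hc, map_mul, map_mul, (X j).aeval_self_charpoly, zero_mul, mul_zero]
  choose qbar hqbar using hq'
  -- the block projectors over the residue field
  let D : Fin r → Matrix ι ι F := fun i => Matrix.diagonal fun z => if z.1 = i then 1 else 0
  have hDval : ∀ i, Polynomial.aeval (Matrix.blockDiagonal' X) (qbar i) = D i := by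
    intro i
    have h1 : Matrix.blockDiagonal' X = bdAlgHom F X := rfl
    rw [h1, Polynomial.aeval_algHom_apply]
    have h2 : Polynomial.aeval X (qbar i)
        = fun j => if j = i then (1 : Matrix (Fin (n j)) (Fin (n j)) F) else 0 := by
      funext j
      have h3 := Polynomial.aeval_algHom_apply
        (Pi.evalAlgHom F (fun j => Matrix (Fin (n j)) (Fin (n j)) F) j) X (qbar i)
      have h4 : Pi.evalAlgHom F (fun j => Matrix (Fin (n j)) (Fin (n j)) F) j X = X j := rfl
      rw [h4] at h3
      show Pi.evalAlgHom F (fun j => Matrix (Fin (n j)) (Fin (n j)) F) j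
        ((Polynomial.aeval X) (qbar i)) = _
      rw [← h3]
      exact hqbar i j
    have h3 : (fun j => if j = i then (1 : Matrix (Fin (n j)) (Fin (n j)) F) else 0)
        = fun j => Matrix.diagonal (fun _ => if j = i then (1 : F) else 0) := by
      funext j; split <;> simp
    rw [h2, h3]
    show Matrix.blockDiagonal'
      (fun j => Matrix.diagonal (fun _ => if j = i then (1 : F) else 0)) = D i
    rw [Matrix.blockDiagonal'_diagonal]
  -- lift the polynomials to A
  have hqA' : ∀ i, ∃ qa : Polynomial A, qa.map (residue A) = qbar i :=
    fun i => Polynomial.map_surjective _ (residue_surjective) (qbar i)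
  choose qA hqA using hqA'
  have hkey : ∀ f : Polynomial A,
      Φ (Polynomial.aeval G f) = Polynomial.aeval (Φ G) (f.map (residue A)) :=
    fun f => mapMatrix_aeval (residue A) G f
  -- setup for the idempotent lifting in the (commutative) subalgebra generated by G
  let R := Algebra.adjoin A {G}
  let ψ : R →+* Matrix ι ι F := Φ.comp (Subalgebra.val R).toRingHom
  obtain ⟨k, hk⟩ : IsNilpotent (maximalIdeal A) := by
    have h := IsArtinianRing.isNilpotent_jacobson_bot (R := A)
    rwa [jacobson_eq_maximalIdeal ⊥ bot_ne_top] at h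
  have hker : ∀ x ∈ RingHom.ker ψ, IsNilpotent x := by
    intro x hx
    refine ⟨k, ?_⟩
    have hx0 : Φ (x : Matrix ι ι A) = 0 := hx
    have hx' : ∀ i j, (x : Matrix ι ι A) i j ∈ maximalIdeal A := by
      intro i j
      have h1 : residue A ((x : Matrix ι ι A) i j) = 0 :=
        congr_fun (congr_fun hx0 i) j
      exact Ideal.Quotient.eq_zero_iff_mem.mp h1
    apply Subtype.ext
    show ((x ^ k : R) : Matrix ι ι A) = 0
    rw [SubmonoidClass.coe_pow]
    ext i j
    have h2 := pow_entries_mem (maximalIdeal A) (x : Matrix ι ι A) hx' k i j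
    rw [hk] at h2
    simpa using h2
  have hD : CompleteOrthogonalIdempotents D := by
    refine ⟨⟨fun i => ?_, fun i j hij => ?_⟩, ?_⟩
    · show D i * D i = D i
      ext z w
      simp only [D]
      rw [Matrix.diagonal_mul_diagonal]
      by_cases h : z = w
      · subst h
        rw [Matrix.diagonal_apply_eq, Matrix.diagonal_apply_eq]
        split <;> simp
      · rw [Matrix.diagonal_apply_ne _ h, Matrix.diagonal_apply_ne _ h]
    · show D i * D j = 0
      ext z w
      simp only [D]
      rw [Matrix.diagonal_mul_diagonal]
      by_cases h : z = w
      · subst h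
        rw [Matrix.diagonal_apply_eq, Matrix.zero_apply]
        by_cases h2 : z.1 = i
        · rw [if_pos h2, if_neg (fun hh => hij (h2.symm.trans hh)), mul_zero]
        · rw [if_neg h2, zero_mul]
      · rw [Matrix.diagonal_apply_ne _ h, Matrix.zero_apply]
    · show ∑ i, D i = 1
      ext z w
      rw [Matrix.sum_apply]
      by_cases h : z = w
      · subst h
        simp [D, Matrix.diagonal_apply_eq, Matrix.one_apply_eq]
      · simp [D, Matrix.diagonal_apply_ne _ h, Matrix.one_apply_ne h]
  have hrange : ∀ i, D i ∈ RingHom.range ψ := by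
    intro i
    refine ⟨⟨Polynomial.aeval G (qA i), Polynomial.aeval_mem_adjoin_singleton _ _⟩, ?_⟩
    show Φ (Polynomial.aeval G (qA i)) = D i
    rw [hkey, hqA, hG, hDval]
  obtain ⟨e, he, hfe⟩ :=
    CompleteOrthogonalIdempotents.lift_of_isNilpotent_ker ψ hker hD hrange
  let E : Fin r → Matrix ι ι A := fun i => (e i : Matrix ι ι A)
  have hEres : ∀ i, Φ (E i) = D i := fun i => congr_fun hfe i
  have hEmul : ∀ i j, E i * E j = if i = j then E i else 0 := by
    intro i j
    have h1 := he.toOrthogonalIdempotents.mul_eq i j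
    have h2 := congrArg (Subtype.val) h1
    simpa [E, apply_ite Subtype.val] using h2
  have hEG : ∀ i, E i * G = G * E i := by
    intro i
    have hGmem : G ∈ R := Algebra.subset_adjoin rfl
    have h1 := mul_comm (e i) (⟨G, hGmem⟩ : R)
    simpa [E] using congrArg Subtype.val h1
  -- the conjugating matrix
  let Γ : Matrix ι ι A := Matrix.of fun x y => E y.1 x y
  have hΓres : Φ Γ = 1 := by
    ext x y
    have h1 : Φ Γ x y = Φ (E y.1) x y := rfl
    rw [h1, hEres]
    simp only [D]
    by_cases h : x = y
    · subst h
      rw [Matrix.one_apply_eq, Matrix.diagonal_apply_eq, if_pos rfl]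
    · rw [Matrix.one_apply_ne h]
      by_cases h2 : x = y
      · exact absurd h2 h
      · rw [Matrix.diagonal_apply_ne _ h]
  have hdet : IsUnit Γ.det := by
    by_contra hd
    have hmem : Γ.det ∈ maximalIdeal A := hd
    have h0 : residue A Γ.det = 0 := Ideal.Quotient.eq_zero_iff_mem.mpr hmem
    have h2 : residue A Γ.det = (Φ Γ).det := (residue A).map_det Γ
    rw [hΓres, Matrix.det_one, h0] at h2
    exact zero_ne_one h2
  have hU : IsUnit Γ := (Matrix.isUnit_iff_isUnit_det Γ).mpr hdet
  let γ : GL ι A := hU.unit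
  have hγval : (γ : Matrix ι ι A) = Γ := hU.unit_spec
  let N : Matrix ι ι A := ((γ⁻¹ : GL ι A) : Matrix ι ι A)
  have hNΓ : N * Γ = 1 := by rw [← hγval]; exact γ.inv_mul
  have hΓN : Γ * N = 1 := by rw [← hγval]; exact γ.mul_inv
  let d : Fin r → ((i : Fin r) × Fin (n i)) → A := fun i z => if z.1 = i then 1 else 0
  let P : Fin r → Matrix ι ι A := fun i => Matrix.diagonal (d i)
  have hEΓ : ∀ i, E i * Γ = Γ * P i := by
    intro i
    ext x y
    simp only [P]
    rw [Matrix.mul_diagonal]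
    simp only [d]
    have h1 : (E i * Γ) x y = (E i * E y.1) x y := rfl
    rw [h1, hEmul]
    by_cases h : i = y.1
    · rw [if_pos h, if_pos h.symm, mul_one]
      subst h
      rfl
    · rw [if_neg h, if_neg (fun hh => h hh.symm), mul_zero, Matrix.zero_apply]
  have hNE : ∀ i, N * E i = P i * N := by
    intro i
    calc N * E i = N * E i * (Γ * N) := by rw [hΓN, mul_one]
      _ = N * (E i * Γ) * N := by simp only [mul_assoc]
      _ = N * (Γ * P i) * N := by rw [hEΓ]
      _ = (N * Γ) * (P i * N) := by simp only [mul_assoc]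
      _ = P i * N := by rw [hNΓ, one_mul]
  have hBP : ∀ i, N * G * Γ * P i = P i * (N * G * Γ) := by
    intro i
    calc N * G * Γ * P i = N * G * (Γ * P i) := by rw [mul_assoc]
      _ = N * G * (E i * Γ) := by rw [hEΓ]
      _ = N * (G * E i) * Γ := by simp only [mul_assoc]
      _ = N * (E i * G) * Γ := by rw [hEG]
      _ = (N * E i) * (G * Γ) := by simp only [mul_assoc]
      _ = (P i * N) * (G * Γ) := by rw [hNE]
      _ = P i * (N * G * Γ) := by simp only [mul_assoc]
  refine ⟨γ, ?_, ?_⟩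
  · intro x y
    rw [hγval]
    have h0 : residue A (Γ x y - (1 : Matrix ι ι A) x y) = 0 := by
      rw [map_sub]
      have h1 : residue A (Γ x y) = Φ Γ x y := rfl
      have h2 : residue A ((1 : Matrix ι ι A) x y) = Φ (1 : Matrix ι ι A) x y := rfl
      rw [h1, h2, hΓres, map_one, sub_self]
    exact Ideal.Quotient.eq_zero_iff_mem.mp h0
  · intro x y hxy
    have hcoe : ((γ⁻¹ * g * γ : GL ι A) : Matrix ι ι A) = N * G * Γ := by
      rw [Units.val_mul, Units.val_mul, hγval]
    rw [hcoe]
    have h1 : (N * G * Γ) x y = (N * G * Γ * P y.1) x y := by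
      simp only [P]
      rw [Matrix.mul_diagonal]
      simp [d]
    rw [h1, hBP]
    simp only [P]
    rw [Matrix.diagonal_mul]
    simp [d, hxy]
end

section
/- Let A be a commutative Artinian local ring with maximal ideal 𝔪 and residue field F, let n = n₁ + ⋯ + n_r be a partition of n into positive integers, and let g ∈ GL_n(A) be block diagonal with diagonal blocks g₁, …, g_r. Assume that the characteristic polynomials of the reductions ḡ₁, …, ḡ_r ∈ GL_{n_i}(F) are pairwise coprime in F[X], and let q be a positive integer such that for each i the characteristic polynomial of ḡ_i^q equals the characteristic polynomial of ḡ_i. Then every h ∈ GL_n(A) satisfying h g h⁻¹ = g^q is block diagonal. -/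
/-!
Let `X` be the `(i, j)` block of `h`, `i ≠ j`. Comparing blocks in `h g = g ^ q h` gives
`X gⱼ = gᵢ ^ q X`, hence `p(gᵢ ^ q) X = X p(gⱼ)` for every polynomial `p`. Taking `p = χ(gⱼ)`,
Cayley–Hamilton gives `χ(gⱼ)(gᵢ ^ q) X = 0`. Modulo `𝔪`, `χ(ḡⱼ)` is coprime to
`χ(ḡᵢ ^ q) = χ(ḡᵢ)`, so `χ(ḡⱼ)(ḡᵢ ^ q)` is invertible; over a local ring invertibility lifts
from the residue field, so `X = 0`.
-/

open IsLocalRing Polynomial Matrix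

namespace Matrix

section Blocks

variable {o α : Type*} {m' n' p' : o → Type*} [DecidableEq o]

theorem blockDiagonal'_blockDiag'_of_apply_eq_zero [Zero α]
    {M : Matrix (Σ i, m' i) (Σ i, n' i) α}
    (hM : ∀ (x : Σ i, m' i) (y : Σ i, n' i), x.1 ≠ y.1 → M x y = 0) :
    blockDiagonal' (blockDiag' M) = M := by
  ext ⟨i, a⟩ ⟨j, b⟩
  rcases eq_or_ne i j with rfl | hij
  · rw [blockDiagonal'_apply_eq]; rfl
  · rw [blockDiagonal'_apply_ne _ _ _ hij, hM _ _ hij]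

variable [Fintype o] [NonUnitalNonAssocSemiring α]

theorem submatrix_sigmaMk_mul_blockDiagonal' [∀ i, Fintype (n' i)]
    (M : Matrix (Σ i, m' i) (Σ i, n' i) α) (N : ∀ i, Matrix (n' i) (p' i) α) (i j : o) :
    (M * blockDiagonal' N).submatrix (Sigma.mk i) (Sigma.mk j) =
      M.submatrix (Sigma.mk i) (Sigma.mk j) * N j := by
  ext a b
  simp only [submatrix_apply, mul_apply, Fintype.sum_sigma, blockDiagonal'_apply]
  rw [Fintype.sum_eq_single j fun k hk => by simp [hk]]
  simp

theorem submatrix_sigmaMk_blockDiagonal'_mul [∀ i, Fintype (n' i)]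
    (M : ∀ i, Matrix (m' i) (n' i) α) (N : Matrix (Σ i, n' i) (Σ i, p' i) α) (i j : o) :
    (blockDiagonal' M * N).submatrix (Sigma.mk i) (Sigma.mk j) =
      M i * N.submatrix (Sigma.mk i) (Sigma.mk j) := by
  ext a b
  simp only [submatrix_apply, mul_apply, Fintype.sum_sigma, blockDiagonal'_apply]
  rw [Fintype.sum_eq_single i fun k hk => by simp [Ne.symm hk]]
  simp

end Blocks

section Polynomial

variable {m k R : Type*} [Fintype m] [Fintype k] [DecidableEq m] [DecidableEq k]

theorem mul_aeval_eq_aeval_mul_of_mul_eq [CommSemiring R] {X : Matrix m k R}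
    {B : Matrix k k R} {C : Matrix m m R} (hX : X * B = C * X) (p : R[X]) :
    X * aeval B p = aeval C p * X := by
  have hpow (d : ℕ) : X * B ^ d = C ^ d * X := by
    induction d with
    | zero => simp
    | succ d ih => rw [pow_succ, pow_succ, ← Matrix.mul_assoc, ih, Matrix.mul_assoc, hX,
        Matrix.mul_assoc]
  simp only [aeval_eq_sum_range, Matrix.mul_sum, Matrix.sum_mul, Matrix.mul_smul,
    Matrix.smul_mul, hpow]

theorem aeval_charpoly_mul_eq_zero_of_mul_eq [CommRing R] {X : Matrix m k R}
    {B : Matrix k k R} {C : Matrix m m R} (hX : X * B = C * X) :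
    aeval C B.charpoly * X = 0 := by
  rw [← mul_aeval_eq_aeval_mul_of_mul_eq hX, aeval_self_charpoly, Matrix.mul_zero]

theorem isUnit_aeval_of_isCoprime_charpoly [CommRing R] {M : Matrix m m R} {p : R[X]}
    (hp : IsCoprime M.charpoly p) : IsUnit (aeval M p) := by
  obtain ⟨u, v, huv⟩ := hp
  refine IsUnit.of_mul_eq_one_right (aeval M v) ?_
  simpa [aeval_self_charpoly] using congrArg (aeval M) huv

theorem map_aeval {S : Type*} [CommRing R] [CommRing S] (f : R →+* S) (M : Matrix m m R)
    (p : R[X]) : (aeval M p).map f = aeval (M.map f) (p.map f) := by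
  refine Polynomial.map_aeval_eq_aeval_map (φ := f) (ψ := f.mapMatrix) ?_ p M
  ext a i j
  simp [algebraMap_matrix_apply, apply_ite f]

theorem isUnit_map_iff {S : Type*} [CommRing R] [CommRing S] (f : R →+* S) [IsLocalHom f]
    (M : Matrix m m R) : IsUnit (M.map f) ↔ IsUnit M := by
  rw [isUnit_iff_isUnit_det, isUnit_iff_isUnit_det, ← RingHom.mapMatrix_apply, ← f.map_det,
    _root_.isUnit_map_iff]

theorem eq_zero_of_mul_eq_of_isCoprime_charpoly_map_residue [CommRing R] [IsLocalRing R]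
    {X : Matrix m k R} {B : Matrix k k R} {C : Matrix m m R} (hX : X * B = C * X)
    (hBC : IsCoprime (C.map (residue R)).charpoly (B.map (residue R)).charpoly) :
    X = 0 := by
  have hunit : IsUnit (aeval C B.charpoly) := by
    rw [← isUnit_map_iff (residue R), map_aeval, ← charpoly_map]
    exact isUnit_aeval_of_isCoprime_charpoly hBC
  calc X = (↑hunit.unit⁻¹ * aeval C B.charpoly) * X := by
        rw [hunit.val_inv_mul, Matrix.one_mul]
    _ = 0 := by rw [Matrix.mul_assoc, aeval_charpoly_mul_eq_zero_of_mul_eq hX, Matrix.mul_zero]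

end Polynomial

end Matrix

theorem conjugator_block_diagonal_general
    {A : Type*} [CommRing A] [IsLocalRing A]
    {r : ℕ} (n : Fin r → ℕ)
    (g : GL ((i : Fin r) × Fin (n i)) A)
    (hblock : ∀ x y : (i : Fin r) × Fin (n i), x.1 ≠ y.1 →
      (g : Matrix ((i : Fin r) × Fin (n i)) ((i : Fin r) × Fin (n i)) A) x y = 0)
    (hcoprime : ∀ i j : Fin r, i ≠ j →
      IsCoprime
        (Matrix.charpoly (Matrix.of fun a b : Fin (n i) =>
          residue A ((g : Matrix ((i : Fin r) × Fin (n i)) ((i : Fin r) × Fin (n i)) A) ⟨i, a⟩ ⟨i, b⟩)))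
        (Matrix.charpoly (Matrix.of fun a b : Fin (n j) =>
          residue A ((g : Matrix ((i : Fin r) × Fin (n i)) ((i : Fin r) × Fin (n i)) A) ⟨j, a⟩ ⟨j, b⟩))))
    (q : ℕ)
    (hqfix : ∀ i : Fin r,
      Matrix.charpoly ((Matrix.of fun a b : Fin (n i) =>
        residue A ((g : Matrix ((i : Fin r) × Fin (n i)) ((i : Fin r) × Fin (n i)) A) ⟨i, a⟩ ⟨i, b⟩)) ^ q)
      = Matrix.charpoly (Matrix.of fun a b : Fin (n i) =>
          residue A ((g : Matrix ((i : Fin r) × Fin (n i)) ((i : Fin r) × Fin (n i)) A) ⟨i, a⟩ ⟨i, b⟩)))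
    (h : GL ((i : Fin r) × Fin (n i)) A)
    (hconj : h * g * h⁻¹ = g ^ q) :
    ∀ x y : (i : Fin r) × Fin (n i), x.1 ≠ y.1 →
      (h : Matrix ((i : Fin r) × Fin (n i)) ((i : Fin r) × Fin (n i)) A) x y = 0 := by
  set G := blockDiag' (g : Matrix ((i : Fin r) × Fin (n i)) ((i : Fin r) × Fin (n i)) A)
  have hg : blockDiagonal' G = g := blockDiagonal'_blockDiag'_of_apply_eq_zero hblock
  have hsemiconj :
      (h : Matrix _ _ A) * blockDiagonal' G = blockDiagonal' (G ^ q) * (h : Matrix _ _ A) := by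
    rw [blockDiagonal'_pow, hg, ← Units.val_mul, ← Units.val_pow_eq_pow_val, ← Units.val_mul,
      ← mul_inv_eq_iff_eq_mul.mp hconj]
  rintro ⟨i, a⟩ ⟨j, b⟩ (hij : i ≠ j)
  suffices (h : Matrix ((i : Fin r) × Fin (n i)) ((i : Fin r) × Fin (n i)) A).submatrix
      (Sigma.mk i) (Sigma.mk j) = 0 from congrFun₂ this a b
  refine eq_zero_of_mul_eq_of_isCoprime_charpoly_map_residue (B := G j) (C := G i ^ q) ?_ ?_
  · simpa only [submatrix_sigmaMk_mul_blockDiagonal', submatrix_sigmaMk_blockDiagonal'_mul,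
      Pi.pow_apply]
      using congrArg (submatrix · (Sigma.mk i) (Sigma.mk j)) hsemiconj
  · rw [Matrix.map_pow]
    exact (hqfix i).symm ▸ hcoprime i j hij

/-- Over an Artinian local ring, if `g` is block diagonal with blocks whose reductions have
pairwise coprime characteristic polynomials, each invariant under taking `q`-th powers, then
any `h` with `h * g * h⁻¹ = g ^ q` is block diagonal. -/
theorem conjugator_block_diagonal
    {A : Type*} [CommRing A] [IsArtinianRing A] [IsLocalRing A]
    {r : ℕ} (n : Fin r → ℕ) (hn : ∀ i, 0 < n i)
    (g : GL ((i : Fin r) × Fin (n i)) A)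
    (hblock : ∀ x y : (i : Fin r) × Fin (n i), x.1 ≠ y.1 →
      (g : Matrix ((i : Fin r) × Fin (n i)) ((i : Fin r) × Fin (n i)) A) x y = 0)
    (hcoprime : ∀ i j : Fin r, i ≠ j →
      IsCoprime
        (Matrix.charpoly (Matrix.of fun a b : Fin (n i) =>
          residue A ((g : Matrix ((i : Fin r) × Fin (n i)) ((i : Fin r) × Fin (n i)) A) ⟨i, a⟩ ⟨i, b⟩)))
        (Matrix.charpoly (Matrix.of fun a b : Fin (n j) =>
          residue A ((g : Matrix ((i : Fin r) × Fin (n i)) ((i : Fin r) × Fin (n i)) A) ⟨j, a⟩ ⟨j, b⟩))))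
    (q : ℕ) (hq : 0 < q)
    (hqfix : ∀ i : Fin r,
      Matrix.charpoly ((Matrix.of fun a b : Fin (n i) =>
        residue A ((g : Matrix ((i : Fin r) × Fin (n i)) ((i : Fin r) × Fin (n i)) A) ⟨i, a⟩ ⟨i, b⟩)) ^ q)
      = Matrix.charpoly (Matrix.of fun a b : Fin (n i) =>
          residue A ((g : Matrix ((i : Fin r) × Fin (n i)) ((i : Fin r) × Fin (n i)) A) ⟨i, a⟩ ⟨i, b⟩)))
    (h : GL ((i : Fin r) × Fin (n i)) A)
    (hconj : h * g * h⁻¹ = g ^ q) :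
    ∀ x y : (i : Fin r) × Fin (n i), x.1 ≠ y.1 →
      (h : Matrix ((i : Fin r) × Fin (n i)) ((i : Fin r) × Fin (n i)) A) x y = 0 :=
  conjugator_block_diagonal_general n g hblock hcoprime q hqfix h hconj
end

section
/- Let R be a commutative ring, let n ≥ 1 and q ≥ 2 be integers, and work in the polynomial ring R[x₁, …, xₙ]. For 1 ≤ i ≤ n let e_i denote the i-th elementary symmetric polynomial in x₁, …, xₙ, and let e_i^{(q)} = e_i(x₁^q, …, xₙ^q) denote the image of e_i under the R-algebra endomorphism sending each x_j to x_j^q. Then the R-subalgebra R[e₁, …, eₙ] generated by e₁, …, eₙ is contained in the R-submodule of R[x₁, …, xₙ] spanned by the set of all products e₁^{a₁} e₂^{a₂} ⋯ eₙ^{aₙ} with 0 ≤ a_j ≤ q − 1 for all j, together with the set of all products g · (e_i^{(q)} − e_i) where 1 ≤ i ≤ n and g ranges over R[e₁, …, eₙ]. -/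
/-!
Order polynomials by their lex-leading exponent. A symmetric `f` has the same leading term as
`c • e^t` for some `t` (fundamental theorem of symmetric polynomials), so by induction it suffices
to put every product `e^t` into the span. If `q ≤ t j`, write `e^t = P * e_j^q` and split
`P * e_j^q = P * (e_j^q - e_j^{(q)}) + P * (e_j^{(q)} - e_j) + P * e_j`.
The middle term is a generator; `e_j^q` and `e_j^{(q)}` are both monic with leading exponent
`q • lead(e_j)`, so the two outer terms are symmetric of smaller leading exponent.
-/

open MvPolynomial AddMonoidAlgebra

namespace MvPolynomial

section Expand

variable {σ R : Type*} [LinearOrder σ]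

theorem supDegree_toLex_expand [CommSemiring R] {p : ℕ} (hp : p ≠ 0) (φ : MvPolynomial σ R) :
    (expand p φ).supDegree toLex = p • φ.supDegree toLex := by
  classical
  have hmono : Monotone (p • · : Lex (σ →₀ ℕ) → Lex (σ →₀ ℕ)) :=
    fun _ _ h => nsmul_le_nsmul_right h p
  rw [supDegree, ← support, support_expand φ hp, Finset.sup_image]
  exact (Finset.apply_sup_eq_sup_comp_of_linearOrder _ hmono (by rw [bot_eq_zero, nsmul_zero])).symm

theorem leadingCoeff_toLex_expand [CommSemiring R] {p : ℕ} (hp : p ≠ 0) (φ : MvPolynomial σ R) :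
    (expand p φ).leadingCoeff toLex = φ.leadingCoeff toLex := by
  rw [leadingCoeff_toLex, leadingCoeff_toLex, supDegree_toLex_expand hp]
  exact coeff_expand_smul p hp φ _

theorem supDegree_toLex_pow_sub_expand_lt [CommRing R] [Nontrivial R] {p : ℕ} (hp : p ≠ 0)
    {f : MvPolynomial σ R} (hf : f.Monic toLex) :
    (f ^ p - expand p f).supDegree toLex < p • f.supDegree toLex ∨ f ^ p = expand p f := by
  have hdeg := hf.supDegree_pow rfl toLex_add toLex.injective (n := p)
  rw [← hdeg]
  refine supDegree_sub_lt_of_leadingCoeff_eq toLex.injective ?_ ?_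
  · rw [hdeg, supDegree_toLex_expand hp]
  · rw [leadingCoeff_toLex_expand hp, hf, hf.pow toLex_add toLex.injective]

end Expand

section Esymm

variable {σ R : Type*} {n : ℕ}

theorem IsSymmetric.expand [CommSemiring R] {φ : MvPolynomial σ R} (hφ : φ.IsSymmetric) (p : ℕ) :
    (expand p φ).IsSymmetric := fun e => by
  rw [rename_expand, hφ]

theorem esymmAlgHomMonomial_eq_C_mul_prod [CommSemiring R] [Fintype σ] (t : Fin n →₀ ℕ) (r : R) :
    esymmAlgHomMonomial σ t r = C r * ∏ j : Fin n, esymm σ R ((j : ℕ) + 1) ^ t j := by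
  rw [esymmAlgHomMonomial, esymmAlgHom_apply, aeval_monomial, algebraMap_eq, Finsupp.prod_pow]

theorem esymmAlgHomMonomial_mem_adjoin [CommSemiring R] [Fintype σ] (t : Fin n →₀ ℕ) (r : R) :
    esymmAlgHomMonomial σ t r ∈
      Algebra.adjoin R (Set.range fun i : Fin n => esymm σ R ((i : ℕ) + 1)) := by
  rw [Algebra.adjoin_range_eq_range_aeval]
  exact ⟨monomial t r, (esymmAlgHom_apply _).symm⟩

theorem supDegree_esymm_pos [CommSemiring R] [Nontrivial R] (i : Fin n) :
    0 < (esymm (Fin n) R (i + 1)).supDegree toLex := by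
  rw [← bot_eq_zero (α := Lex (Fin n →₀ ℕ)), bot_lt_iff_ne_bot, bot_eq_zero]
  intro h
  have h0 := congr_arg (fun d => (ofLex d : Fin n →₀ ℕ) ⟨0, i.pos⟩) h
  rw [supDegree_esymm i.isLt] at h0
  simp [Fin.accumulate_apply, Finsupp.single_apply] at h0

theorem IsSymmetric.exists_supDegree_esymmAlgHomMonomial [CommSemiring R]
    {f : MvPolynomial (Fin n) R} (hf : f.IsSymmetric) :
    ∃ t : Fin n →₀ ℕ, ∀ r : R, r ≠ 0 →
      (esymmAlgHomMonomial (Fin n) t r).supDegree toLex = f.supDegree toLex := by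
  refine ⟨Finsupp.equivFunOnFinite.symm (Fin.invAccumulate n n ↑(ofLex (f.supDegree toLex))),
    fun r hr => ?_⟩
  rw [← ofLex_inj, DFunLike.ext'_iff, supDegree_esymmAlgHomMonomial hr _ le_rfl]
  exact Fin.accumulate_invAccumulate le_rfl hf.antitone_supDegree

end Esymm

end MvPolynomial

noncomputable def esymmReducedSpan (R : Type*) [CommRing R] (n q : ℕ) :
    Submodule R (MvPolynomial (Fin n) R) :=
  Submodule.span R
    ({x : MvPolynomial (Fin n) R | ∃ a : Fin n → ℕ, (∀ j, a j ≤ q - 1) ∧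
        x = ∏ j : Fin n, esymm (Fin n) R ((j : ℕ) + 1) ^ a j} ∪
     {x : MvPolynomial (Fin n) R | ∃ i : Fin n,
        ∃ g ∈ Algebra.adjoin R
          (Set.range fun i : Fin n => esymm (Fin n) R ((i : ℕ) + 1)),
        x = g * (MvPolynomial.aeval (fun j : Fin n => (X j : MvPolynomial (Fin n) R) ^ q)
                    (esymm (Fin n) R ((i : ℕ) + 1))
                  - esymm (Fin n) R ((i : ℕ) + 1))})

section ReducedSpan

variable {R : Type*} [CommRing R] {n q : ℕ}

theorem esymmAlgHomMonomial_mul_esymm_pow_mem_esymmReducedSpan [Nontrivial R] (hq : 2 ≤ q)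
    (s : Fin n →₀ ℕ) (j : Fin n) (hlower : ∀ g : MvPolynomial (Fin n) R, g.IsSymmetric →
      g.supDegree toLex < (esymmAlgHomMonomial (Fin n) s (1 : R)).supDegree toLex
        + q • (esymm (Fin n) R ((j : ℕ) + 1)).supDegree toLex → g ∈ esymmReducedSpan R n q) :
    esymmAlgHomMonomial (Fin n) s (1 : R) * esymm (Fin n) R ((j : ℕ) + 1) ^ q
      ∈ esymmReducedSpan R n q := by
  set P := esymmAlgHomMonomial (Fin n) s (1 : R)
  set e := esymm (Fin n) R ((j : ℕ) + 1)
  have hP : P.Monic toLex := leadingCoeff_esymmAlgHomMonomial _ le_rfl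
  have he : e.Monic toLex := monic_esymm j.isLt
  have hPsymm : P.IsSymmetric := isSymmetric_esymmAlgHomMonomial _ _
  have hesymm : e.IsSymmetric := esymm_isSymmetric _ _ _
  rw [show P * e ^ q = P * (e ^ q - expand q e) + P * (expand q e - e) + P * e by ring]
  refine Submodule.add_mem _ (Submodule.add_mem _ ?_ ?_) ?_
  · rcases supDegree_toLex_pow_sub_expand_lt (p := q) (by omega) he with hlt | heq
    · refine hlower _ (hPsymm.mul (((symmetricSubalgebra _ R).pow_mem hesymm q).sub
        (hesymm.expand q))) ?_
      calc (P * (e ^ q - expand q e)).supDegree toLex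
          ≤ P.supDegree toLex + (e ^ q - expand q e).supDegree toLex :=
            supDegree_mul_le toLex_add
        _ < P.supDegree toLex + q • e.supDegree toLex := add_lt_add_right hlt _
    · rw [heq, sub_self, mul_zero]
      exact Submodule.zero_mem _
  · refine Submodule.subset_span (Or.inr ⟨j, P, esymmAlgHomMonomial_mem_adjoin _ _, ?_⟩)
    rw [coe_expand, aeval_def, algebraMap_eq]
    rfl
  · refine hlower _ (hPsymm.mul hesymm) ?_
    rw [hP.supDegree_mul toLex.injective toLex_add (by rw [bot_eq_zero, add_zero]) he]
    have hlt := nsmul_lt_nsmul_left (supDegree_esymm_pos (R := R) j) (show 1 < q by omega)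
    rw [one_nsmul] at hlt
    exact add_lt_add_right hlt _

theorem esymmAlgHomMonomial_one_mem_esymmReducedSpan [Nontrivial R] (hq : 2 ≤ q)
    (t : Fin n →₀ ℕ) (hlower : ∀ g : MvPolynomial (Fin n) R, g.IsSymmetric →
      g.supDegree toLex < (esymmAlgHomMonomial (Fin n) t (1 : R)).supDegree toLex →
        g ∈ esymmReducedSpan R n q) :
    esymmAlgHomMonomial (Fin n) t (1 : R) ∈ esymmReducedSpan R n q := by
  by_cases hsmall : ∀ j, t j ≤ q - 1
  · refine Submodule.subset_span (Or.inl ⟨t, hsmall, ?_⟩)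
    rw [esymmAlgHomMonomial_eq_C_mul_prod, map_one, one_mul]
  obtain ⟨j, hj⟩ := not_forall.1 hsmall
  obtain ⟨s, rfl⟩ : ∃ s, t = s + Finsupp.single j q :=
    ⟨_, (tsub_add_cancel_of_le (Finsupp.single_le_iff.2 (by omega : q ≤ t j))).symm⟩
  have hP : (esymmAlgHomMonomial (Fin n) s (1 : R)).Monic toLex :=
    leadingCoeff_esymmAlgHomMonomial _ le_rfl
  have he : (esymm (Fin n) R ((j : ℕ) + 1)).Monic toLex := monic_esymm j.isLt
  rw [esymmAlgHomMonomial_add, esymmAlgHomMonomial_single_one] at hlower ⊢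
  refine esymmAlgHomMonomial_mul_esymm_pow_mem_esymmReducedSpan hq s j fun g hg hlt => ?_
  refine hlower g hg (hlt.trans_eq ?_)
  rw [hP.supDegree_mul toLex.injective toLex_add (by rw [bot_eq_zero, add_zero])
      (he.pow toLex_add toLex.injective),
    he.supDegree_pow rfl toLex_add toLex.injective]

theorem MvPolynomial.IsSymmetric.mem_esymmReducedSpan (hq : 2 ≤ q) {f : MvPolynomial (Fin n) R}
    (hf : f.IsSymmetric) : f ∈ esymmReducedSpan R n q := by
  nontriviality R
  induction hd : f.supDegree toLex using WellFoundedLT.induction generalizing f with | _ d ih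
  subst hd
  obtain rfl | hf0 := eq_or_ne f 0
  · exact Submodule.zero_mem _
  have hc : f.leadingCoeff toLex ≠ 0 := (leadingCoeff_ne_zero toLex.injective).2 hf0
  obtain ⟨t, ht⟩ := hf.exists_supDegree_esymmAlgHomMonomial
  have hsmul : esymmAlgHomMonomial (Fin n) t (f.leadingCoeff toLex)
      = f.leadingCoeff toLex • esymmAlgHomMonomial (Fin n) t (1 : R) := by
    rw [esymmAlgHomMonomial_eq_C_mul_prod, esymmAlgHomMonomial_eq_C_mul_prod, map_one, one_mul,
      smul_eq_C_mul]
  have hlead : esymmAlgHomMonomial (Fin n) t (1 : R) ∈ esymmReducedSpan R n q :=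
    esymmAlgHomMonomial_one_mem_esymmReducedSpan hq t fun g hg hlt =>
      ih _ (hlt.trans_eq (ht (1 : R) one_ne_zero)) hg rfl
  have hrest :
      f - esymmAlgHomMonomial (Fin n) t (f.leadingCoeff toLex) ∈ esymmReducedSpan R n q := by
    rcases supDegree_sub_lt_of_leadingCoeff_eq toLex.injective (ht _ hc).symm
      (leadingCoeff_esymmAlgHomMonomial (r := f.leadingCoeff toLex) t le_rfl).symm with hlt | heq
    · exact ih _ hlt (hf.sub (isSymmetric_esymmAlgHomMonomial _ _)) rfl
    · rw [sub_eq_zero.2 heq]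
      exact Submodule.zero_mem _
  have hsum := Submodule.add_mem _ hrest (Submodule.smul_mem _ (f.leadingCoeff toLex) hlead)
  rwa [← hsmul, sub_add_cancel] at hsum

end ReducedSpan

theorem esymm_span_general
    {R : Type*} [CommRing R] (n q : ℕ) (hq : 2 ≤ q) :
    (Algebra.adjoin R
        (Set.range fun i : Fin n => esymm (Fin n) R ((i : ℕ) + 1)) : Set (MvPolynomial (Fin n) R))
      ⊆ (Submodule.span R
          ({x : MvPolynomial (Fin n) R | ∃ a : Fin n → ℕ, (∀ j, a j ≤ q - 1) ∧
              x = ∏ j : Fin n, esymm (Fin n) R ((j : ℕ) + 1) ^ a j} ∪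
           {x : MvPolynomial (Fin n) R | ∃ i : Fin n,
              ∃ g ∈ Algebra.adjoin R
                (Set.range fun i : Fin n => esymm (Fin n) R ((i : ℕ) + 1)),
              x = g * (MvPolynomial.aeval (fun j : Fin n => (X j : MvPolynomial (Fin n) R) ^ q)
                          (esymm (Fin n) R ((i : ℕ) + 1))
                        - esymm (Fin n) R ((i : ℕ) + 1))}) : Set (MvPolynomial (Fin n) R)) := by
  intro f hf
  have hsymm : Algebra.adjoin R (Set.range fun i : Fin n => esymm (Fin n) R ((i : ℕ) + 1))
      ≤ symmetricSubalgebra (Fin n) R :=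
    Algebra.adjoin_le (Set.range_subset_iff.2 fun i => esymm_isSymmetric _ _ _)
  exact IsSymmetric.mem_esymmReducedSpan hq (hsymm hf)

/-- The subalgebra generated by the elementary symmetric polynomials `e₁, …, eₙ` is contained
in the module spanned by the monomials `e₁^{a₁} ⋯ eₙ^{aₙ}` with all `aⱼ ≤ q - 1` together with
all products `g * (eᵢ^{(q)} - eᵢ)` with `g` in that subalgebra, where `eᵢ^{(q)}` is the image of
`eᵢ` under `xⱼ ↦ xⱼ^q`. -/
theorem esymm_span
    {R : Type*} [CommRing R] (n q : ℕ) (hn : 1 ≤ n) (hq : 2 ≤ q) :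
    (Algebra.adjoin R
        (Set.range fun i : Fin n => esymm (Fin n) R ((i : ℕ) + 1)) : Set (MvPolynomial (Fin n) R))
      ⊆ (Submodule.span R
          ({x : MvPolynomial (Fin n) R | ∃ a : Fin n → ℕ, (∀ j, a j ≤ q - 1) ∧
              x = ∏ j : Fin n, esymm (Fin n) R ((j : ℕ) + 1) ^ a j} ∪
           {x : MvPolynomial (Fin n) R | ∃ i : Fin n,
              ∃ g ∈ Algebra.adjoin R
                (Set.range fun i : Fin n => esymm (Fin n) R ((i : ℕ) + 1)),
              x = g * (MvPolynomial.aeval (fun j : Fin n => (X j : MvPolynomial (Fin n) R) ^ q)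
                          (esymm (Fin n) R ((i : ℕ) + 1))
                        - esymm (Fin n) R ((i : ℕ) + 1))}) : Set (MvPolynomial (Fin n) R)) :=
  esymm_span_general n q hq
end

section
/- Let p be a prime, let K be an algebraically closed field of characteristic p, let q = p^k with k ≥ 1, and let n ≥ 1 be an integer. Then the set of multisets s of elements of K such that s has cardinality n, 0 is not an element of s, and the image of s under the map z ↦ z^q equals s, is finite of cardinality q^{n−1}(q − 1). -/
/-!
A multiset `s` of `n` elements of the algebraically closed field `K` is the root multiset of
exactly one monic polynomial `∏ (X - a)` of degree `n`, which is determined by its `n` lower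
coefficients. Mapping `s` by the Frobenius power `z ↦ z ^ q` maps these coefficients by the same
ring homomorphism, so `s` is stable exactly when every coefficient is a root of `X ^ q - X`, a set
of `q` elements; and `0 ∉ s` exactly when the constant coefficient is nonzero. This leaves
`(q - 1) * q ^ (n - 1)` choices.
-/

open Polynomial

namespace IsAlgClosed

variable {K : Type*} [Field K] [IsAlgClosed K]

noncomputable def multisetEquivMonic (n : ℕ) :
    {s : Multiset K // Multiset.card s = n} ≃ {f : K[X] // f.Monic ∧ f.natDegree = n} where
  toFun s := ⟨(s.1.map (X - C ·)).prod, monic_multiset_prod_of_monic _ _ fun a _ => monic_X_sub_C a,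
    (natDegree_multiset_prod_X_sub_C_eq_card s.1).trans s.2⟩
  invFun f := ⟨f.1.roots, card_roots_eq_natDegree.trans f.2.2⟩
  left_inv s := Subtype.ext (roots_multiset_prod_X_sub_C s.1)
  right_inv f := Subtype.ext <| prod_multiset_X_sub_C_of_monic_of_roots_card_eq f.2.1
    card_roots_eq_natDegree

noncomputable def multisetEquivCoeffs (n : ℕ) :
    {s : Multiset K // Multiset.card s = n} ≃ (Fin n → K) :=
  (multisetEquivMonic n).trans ((monicEquivDegreeLT n).trans (degreeLTEquiv K n).toEquiv)

theorem multisetEquivCoeffs_apply {n : ℕ} (s : {s : Multiset K // Multiset.card s = n})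
    (i : Fin n) : multisetEquivCoeffs n s i = (s.1.map (X - C ·)).prod.coeff i :=
  eraseLead_coeff_of_ne _ (i.2.trans_eq (multisetEquivMonic n s).2.2.symm).ne

theorem multisetEquivCoeffs_map {n : ℕ} (φ : K →+* K)
    (s : {s : Multiset K // Multiset.card s = n}) :
    multisetEquivCoeffs n ⟨s.1.map φ, (Multiset.card_map _ _).trans s.2⟩ =
      φ ∘ multisetEquivCoeffs n s := by
  funext i
  simp [multisetEquivCoeffs_apply, ← coeff_map, Polynomial.map_multiset_prod, Multiset.map_map]

theorem multisetEquivCoeffs_zero_eq_zero_iff {n : ℕ}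
    (s : {s : Multiset K // Multiset.card s = n + 1}) :
    multisetEquivCoeffs (n + 1) s 0 = 0 ↔ (0 : K) ∈ s.1 := by
  simp [multisetEquivCoeffs_apply, coeff_zero_eq_eval_zero, eval_multiset_prod,
    Multiset.prod_eq_zero_iff]

theorem map_eq_self_iff_multisetEquivCoeffs {n : ℕ} (φ : K →+* K)
    (s : {s : Multiset K // Multiset.card s = n}) :
    s.1.map φ = s.1 ↔ ∀ i, φ (multisetEquivCoeffs n s i) = multisetEquivCoeffs n s i := by
  rw [← funext_iff, ← Function.comp_def, ← multisetEquivCoeffs_map,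
    (multisetEquivCoeffs n).apply_eq_iff_eq, Subtype.ext_iff]

noncomputable def multisetStableEquivCoeffs (φ : K →+* K) (n : ℕ) :
    {s : Multiset K // Multiset.card s = n + 1 ∧ (0 : K) ∉ s ∧ s.map φ = s} ≃
      {c : Fin (n + 1) → K // c 0 ≠ 0 ∧ ∀ i, φ (c i) = c i} :=
  (Equiv.subtypeSubtypeEquivSubtypeInter _ fun s => (0 : K) ∉ s ∧ s.map φ = s).symm.trans <|
    (multisetEquivCoeffs (n + 1)).subtypeEquiv fun s =>
      and_congr (multisetEquivCoeffs_zero_eq_zero_iff s).not.symm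
        (map_eq_self_iff_multisetEquivCoeffs φ s)

theorem exists_finset_card_eq_mem_iff_pow_eq_self (K : Type*) [Field K] [IsAlgClosed K] {p : ℕ}
    (hp : p.Prime) [CharP K p] {k : ℕ} (hk : k ≠ 0) :
    ∃ A : Finset K, A.card = p ^ k ∧ ∀ x, x ∈ A ↔ x ^ p ^ k = x := by
  classical
  have hdeg : (X ^ p ^ k - X : K[X]).natDegree = p ^ k :=
    FiniteField.X_pow_card_pow_sub_X_natDegree_eq K hk hp.one_lt
  have hne : (X ^ p ^ k - X : K[X]) ≠ 0 := FiniteField.X_pow_card_pow_sub_X_ne_zero K hk hp.one_lt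
  refine ⟨(X ^ p ^ k - X : K[X]).roots.toFinset, ?_, fun x => ?_⟩
  · rw [Multiset.toFinset_card_of_nodup
      (nodup_roots (galois_poly_separable p _ (dvd_pow_self p hk))), card_roots_eq_natDegree, hdeg]
  · simp [mem_roots hne, sub_eq_zero]

end IsAlgClosed

theorem Nat.card_fin_succ_fun_mem_of_zero_ne {α : Type*} (A : Finset α) {a : α} (ha : a ∈ A)
    (m : ℕ) :
    Nat.card {c : Fin (m + 1) → α // c 0 ≠ a ∧ ∀ i, c i ∈ A} = (A.card - 1) * A.card ^ m := by
  classical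
  have hmem : ∀ c : Fin (m + 1) → α, (c 0 ≠ a ∧ ∀ i, c i ∈ A) ↔
      c ∈ Fintype.piFinset (Fin.cons (A.erase a) fun _ => A) := by
    intro c
    simp only [Fintype.mem_piFinset, Fin.forall_fin_succ, Fin.cons_zero, Fin.cons_succ,
      Finset.mem_erase]
    tauto
  rw [Nat.card_congr (Equiv.subtypeEquivRight hmem), Nat.card_eq_fintype_card, Fintype.card_coe,
    Fintype.card_piFinset, Fin.prod_univ_succ]
  simp [Finset.card_erase_of_mem ha]

/-- Over an algebraically closed field of characteristic `p`, with `q = p^k`, the number of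
multisets of cardinality `n` of nonzero elements stable under the `q`-power map is
`q^{n-1}(q-1)`. -/
theorem card_qPowerStable_multisets_charP
    {K : Type*} [Field K] [IsAlgClosed K]
    (p : ℕ) (hp : p.Prime) [CharP K p] (k : ℕ) (hk : 1 ≤ k) (n : ℕ) (hn : 1 ≤ n) :
    {s : Multiset K | Multiset.card s = n ∧ (0 : K) ∉ s ∧
        Multiset.map (fun z : K => z ^ (p ^ k)) s = s}.Finite ∧
      Nat.card {s : Multiset K | Multiset.card s = n ∧ (0 : K) ∉ s ∧
        Multiset.map (fun z : K => z ^ (p ^ k)) s = s}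
        = (p ^ k) ^ (n - 1) * (p ^ k - 1) := by
  have : ExpChar K p := ExpChar.prime hp
  obtain ⟨m, rfl⟩ : ∃ m, n = m + 1 := ⟨n - 1, by omega⟩
  obtain ⟨A, hAcard, hA⟩ :=
    IsAlgClosed.exists_finset_card_eq_mem_iff_pow_eq_self K hp (k := k) (by omega)
  have hcard : Nat.card {s : Multiset K // Multiset.card s = m + 1 ∧ (0 : K) ∉ s ∧
      s.map (iterateFrobenius K p k) = s} = (p ^ k - 1) * (p ^ k) ^ m := by
    rw [Nat.card_congr (IsAlgClosed.multisetStableEquivCoeffs _ m), ← hAcard,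
      ← Nat.card_fin_succ_fun_mem_of_zero_ne A ((hA 0).2 (zero_pow (pow_pos hp.pos k).ne')) m]
    exact Nat.card_congr <| Equiv.subtypeEquivRight fun c =>
      and_congr_right fun _ => forall_congr' fun i => (hA (c i)).symm
  rw [show (fun z : K => z ^ p ^ k) = iterateFrobenius K p k from rfl]
  refine ⟨Set.finite_coe_iff.mp (Nat.finite_of_card_ne_zero ?_), ?_⟩ <;> rw [Set.coe_ofPred, hcard]
  · exact Nat.mul_ne_zero (Nat.sub_ne_zero_of_lt (Nat.one_lt_pow (by omega) hp.one_lt))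
      (pow_ne_zero _ (pow_pos hp.pos k).ne')
  · rw [Nat.add_sub_cancel, mul_comm]
end

section
/- Let A be a commutative Artinian local ring with maximal ideal 𝔪 and residue field F, and let n ≥ 1. Let g ∈ GL_n(A) be a matrix whose entrywise reduction ḡ ∈ GL_n(F) is the unipotent matrix with 1's on the diagonal, 1's on the subdiagonal (entries in positions (i+1, i) for 1 ≤ i ≤ n−1), and 0's elsewhere. Let a₁, …, aₙ ∈ A with each a_i ≡ 1 (mod 𝔪) and such that the characteristic polynomial of g equals (X − a₁)(X − a₂)⋯(X − aₙ) in A[X]. Then there exists γ ∈ GL_n(A) with γ ≡ 1 (mod 𝔪) entrywise such that γ⁻¹ g γ is the matrix with (i,i) entry a_i for 1 ≤ i ≤ n, with (i+1, i) entry 1 for 1 ≤ i ≤ n−1, and all other entries 0. -/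
open IsLocalRing

private lemma fin_sum_ite_nat {R : Type*} [AddCommMonoid R] {n : ℕ} (k : ℕ) (c : Fin n → R) :
    (∑ j : Fin n, if (j : ℕ) = k then c j else 0)
      = if h : k < n then c ⟨k, h⟩ else 0 := by
  split_ifs with h
  · rw [Finset.sum_eq_single (⟨k, h⟩ : Fin n)]
    · simp
    · intro b _ hb
      rw [if_neg]
      simpa [Fin.ext_iff] using hb
    · simp
  · apply Finset.sum_eq_zero
    intro j _
    rw [if_neg]
    intro hj
    exact h (hj ▸ j.isLt)

/-- A lift of the regular unipotent lower-shift matrix whose characteristic polynomial factors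
as `(X - a₁)⋯(X - aₙ)` with each `aᵢ ≡ 1 (mod 𝔪)` can be conjugated, by a matrix congruent to
the identity modulo the maximal ideal, to the matrix with `aᵢ` on the diagonal and `1` on the
subdiagonal. -/
theorem conjugate_to_companion_form
    {A : Type*} [CommRing A] [IsArtinianRing A] [IsLocalRing A]
    (n : ℕ) (hn : 1 ≤ n)
    (g : GL (Fin n) A)
    (hgbar : ∀ i j : Fin n,
      residue A ((g : Matrix (Fin n) (Fin n) A) i j)
        = if i = j then 1 else if (i : ℕ) = (j : ℕ) + 1 then 1 else 0)
    (a : Fin n → A) (ha : ∀ i, a i - 1 ∈ maximalIdeal A)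
    (hchar : Matrix.charpoly (g : Matrix (Fin n) (Fin n) A)
      = ∏ i : Fin n, (Polynomial.X - Polynomial.C (a i))) :
    ∃ γ : GL (Fin n) A,
      (∀ i j : Fin n,
        (γ : Matrix (Fin n) (Fin n) A) i j - (1 : Matrix (Fin n) (Fin n) A) i j
          ∈ maximalIdeal A) ∧
      ((γ⁻¹ * g * γ : GL (Fin n) A) : Matrix (Fin n) (Fin n) A)
        = Matrix.of fun i j : Fin n =>
            if i = j then a i else if (i : ℕ) = (j : ℕ) + 1 then 1 else 0 := by
  classical
  set G : Matrix (Fin n) (Fin n) A := (g : Matrix (Fin n) (Fin n) A) with hGdef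
  -- extend `a` to ℕ
  set a' : ℕ → A := fun k => if h : k < n then a ⟨k, h⟩ else 0 with ha'def
  -- partial products of the characteristic polynomial
  set Q : ℕ → Polynomial A :=
    fun k => ∏ i ∈ Finset.range k, (Polynomial.X - Polynomial.C (a' i)) with hQdef
  have hQsucc : ∀ k : ℕ, Q (k + 1) = (Polynomial.X - Polynomial.C (a' k)) * Q k := by
    intro k
    simp only [hQdef]
    rw [Finset.prod_range_succ, mul_comm]
  have hQn : Q n = Matrix.charpoly G := by
    simp only [hQdef]
    rw [hchar, ← Fin.prod_univ_eq_prod_range (fun i => Polynomial.X - Polynomial.C (a' i)) n]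
    apply Finset.prod_congr rfl
    intro i _
    simp [ha'def, i.isLt]
  -- the basis vector e₀ and the iterated vectors
  set e₀ : Fin n → A := fun i => if (i : ℕ) = 0 then 1 else 0 with he₀def
  set w : ℕ → Fin n → A :=
    fun k => (Polynomial.aeval G (Q k)).mulVec e₀ with hwdef
  have hw0 : w 0 = e₀ := by
    simp [hwdef, hQdef, Matrix.one_mulVec]
  have hwsucc : ∀ k : ℕ, w (k + 1) = G.mulVec (w k) - a' k • w k := by
    intro k
    rw [hwdef]
    simp only [hQsucc k, map_mul, map_sub, Polynomial.aeval_X, Polynomial.aeval_C]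
    rw [← Matrix.mulVec_mulVec, Matrix.sub_mulVec, Algebra.algebraMap_eq_smul_one,
      Matrix.smul_mulVec, Matrix.one_mulVec]
  have hwn : w n = 0 := by
    simp only [hwdef]
    rw [hQn, Matrix.aeval_self_charpoly, Matrix.zero_mulVec]
  -- reduction of `a'`
  have hares : ∀ k : ℕ, k < n → ∀ h : k < n, residue A (a' k) = 1 := by
    intro k _ h
    have := ha ⟨k, h⟩
    have h1 : residue A (a ⟨k, h⟩ - 1) = 0 := Ideal.Quotient.eq_zero_iff_mem.mpr this
    rw [map_sub, map_one, sub_eq_zero] at h1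
    simpa [ha'def, h] using h1
  -- reduction of the vectors w
  have hwres : ∀ k : ℕ, ∀ i : Fin n, residue A (w k i) = if (i : ℕ) = k then 1 else 0 := by
    intro k
    induction k with
    | zero =>
      intro i
      rw [hw0, he₀def]
      split_ifs <;> simp_all
    | succ k ih =>
      intro i
      have hstep : w (k + 1) i = G.mulVec (w k) i - a' k * w k i := by
        rw [hwsucc k]; simp
      rw [hstep, map_sub, map_mul]
      have hmv : residue A (G.mulVec (w k) i)
          = ∑ j : Fin n, residue A (G i j) * residue A (w k j) := by
        simp [Matrix.mulVec, dotProduct, map_sum, map_mul]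
      rw [hmv]
      have hsum : ∑ j : Fin n, residue A (G i j) * residue A (w k j)
          = if h : k < n then
              (if i = ⟨k, h⟩ then 1 else if (i : ℕ) = k + 1 then 1 else 0)
            else 0 := by
        have h1 : ∀ j : Fin n, residue A (G i j) * residue A (w k j)
            = if (j : ℕ) = k then
                (if i = j then 1 else if (i : ℕ) = (j : ℕ) + 1 then 1 else 0) else 0 := by
          intro j
          rw [hgbar i j, ih j]
          by_cases hj : (j : ℕ) = k <;> simp [hj]
        simp only [h1]
        rw [fin_sum_ite_nat k
          (fun j : Fin n => if i = j then 1 else if (i : ℕ) = (j : ℕ) + 1 then 1 else 0)]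
      rw [hsum, ih i]
      by_cases hk : k < n
      · rw [dif_pos hk, hares k hk hk]
        have hik : (i = (⟨k, hk⟩ : Fin n)) ↔ ((i : ℕ) = k) := by
          simp [Fin.ext_iff]
        split_ifs with h1 h2 h3 h4 h5 <;> simp_all <;> omega
      · have hik : ¬ ((i : ℕ) = k) := by
          intro h; exact hk (h ▸ i.isLt)
        have hik1 : ¬ ((i : ℕ) = k + 1) := by
          have := i.isLt; omega
        have ha0 : residue A (a' k) = 0 := by
          simp [ha'def, hk]
        rw [dif_neg hk, ha0, if_neg hik, if_neg hik1]
        ring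
  -- the conjugating matrix
  set γm : Matrix (Fin n) (Fin n) A := Matrix.of fun i j : Fin n => w (j : ℕ) i with hγdef
  -- its reduction is the identity
  have hγres : ∀ i j : Fin n, residue A (γm i j) = if i = j then 1 else 0 := by
    intro i j
    simp only [hγdef, Matrix.of_apply]
    rw [hwres (j : ℕ) i]
    by_cases h : i = j
    · simp [h]
    · rw [if_neg h, if_neg]
      intro hc
      exact h (Fin.ext hc)
  -- it is invertible
  have hdet : IsUnit γm.det := by
    have h1 : residue A γm.det = 1 := by
      have h2 : γm.map (residue A) = 1 := by
        ext i j
        simp only [Matrix.map_apply, Matrix.one_apply]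
        exact hγres i j
      rw [RingHom.map_det, RingHom.mapMatrix_apply, h2, Matrix.det_one]
    by_contra hc
    have : γm.det ∈ maximalIdeal A := hc
    have : residue A γm.det = 0 := Ideal.Quotient.eq_zero_iff_mem.mpr this
    rw [h1] at this
    exact one_ne_zero this
  have hγunit : IsUnit γm := (Matrix.isUnit_iff_isUnit_det γm).mpr hdet
  obtain ⟨γ, hγ⟩ := hγunit
  -- the target matrix
  set T : Matrix (Fin n) (Fin n) A := Matrix.of fun i j : Fin n =>
    if i = j then a i else if (i : ℕ) = (j : ℕ) + 1 then 1 else 0 with hTdef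
  -- key intertwining identity
  have hkey : G * γm = γm * T := by
    ext i j
    have hl : (G * γm) i j = w ((j : ℕ) + 1) i + a' (j : ℕ) * w (j : ℕ) i := by
      have h1 : (G * γm) i j = G.mulVec (w (j : ℕ)) i := by
        simp [Matrix.mul_apply, Matrix.mulVec, dotProduct, hγdef]
      rw [h1, hwsucc (j : ℕ)]
      simp only [Pi.sub_apply, Pi.smul_apply, smul_eq_mul]
      ring
    have hr : (γm * T) i j = w (j : ℕ) i * a j + w ((j : ℕ) + 1) i := by
      have hT : ∀ k : Fin n, T k j
          = (if k = j then a j else 0) + (if (k : ℕ) = (j : ℕ) + 1 then 1 else 0) := by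
        intro k
        rw [hTdef]
        simp only [Matrix.of_apply]
        by_cases h1 : k = j
        · subst h1
          simp
        · by_cases h2 : (k : ℕ) = (j : ℕ) + 1 <;> simp [h1, h2]
      have h1 : (γm * T) i j
          = ∑ k : Fin n, (w (k : ℕ) i * (if k = j then a j else 0)
              + w (k : ℕ) i * (if (k : ℕ) = (j : ℕ) + 1 then 1 else 0)) := by
        rw [Matrix.mul_apply]
        apply Finset.sum_congr rfl
        intro k _
        rw [hT k]
        simp only [hγdef, Matrix.of_apply]
        ring
      rw [h1, Finset.sum_add_distrib]
      congr 1
      · rw [Finset.sum_eq_single j]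
        · simp
        · intro b _ hb; simp [hb]
        · simp
      · have h2 : ∀ k : Fin n, w (k : ℕ) i * (if (k : ℕ) = (j : ℕ) + 1 then 1 else 0)
            = if (k : ℕ) = (j : ℕ) + 1 then w (k : ℕ) i else 0 := by
          intro k; split_ifs <;> ring
        simp only [h2]
        rw [fin_sum_ite_nat ((j : ℕ) + 1) (fun k : Fin n => w (k : ℕ) i)]
        by_cases h3 : (j : ℕ) + 1 < n
        · rw [dif_pos h3]
        · rw [dif_neg h3]
          have hjn : (j : ℕ) + 1 = n := by
            have := j.isLt; omega
          rw [hjn, hwn]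
          simp
    rw [hl, hr]
    have : a' (j : ℕ) = a j := by simp [ha'def, j.isLt]
    rw [this]
    ring
  refine ⟨γ, ?_, ?_⟩
  · intro i j
    have h0 : residue A ((γ : Matrix (Fin n) (Fin n) A) i j
        - (1 : Matrix (Fin n) (Fin n) A) i j) = 0 := by
      rw [map_sub, hγ, hγres i j, Matrix.one_apply]
      split_ifs <;> simp
    exact Ideal.Quotient.eq_zero_iff_mem.mp h0
  · have hcoe : ((γ⁻¹ * g * γ : GL (Fin n) A) : Matrix (Fin n) (Fin n) A)
        = (γ⁻¹ : GL (Fin n) A) * G * γm := by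
      rw [← hγ]
      rfl
    rw [hcoe]
    have : (G * γm : Matrix (Fin n) (Fin n) A) = γm * T := hkey
    calc ((γ⁻¹ : GL (Fin n) A) : Matrix (Fin n) (Fin n) A) * G * γm
        = ((γ⁻¹ : GL (Fin n) A) : Matrix (Fin n) (Fin n) A) * (γm * T) := by
          rw [mul_assoc, hkey]
      _ = (((γ⁻¹ : GL (Fin n) A) : Matrix (Fin n) (Fin n) A) * γm) * T := by
          rw [mul_assoc]
      _ = T := by
          rw [← hγ, ← Units.val_mul, inv_mul_cancel]
          simp
end

section
/- Let A be a commutative ring, let n ≥ 1 and q ≥ 1 be integers, and let a₁, …, aₙ ∈ A satisfy the identity (X − a₁)⋯(X − aₙ) = (X − a₁^q)⋯(X − aₙ^q) in A[X]. Let Σ ∈ M_n(A) be the matrix with (i,i) entry a_i for 1 ≤ i ≤ n, with (i+1, i) entry 1 for 1 ≤ i ≤ n−1, and all other entries 0, and let e₁ denote the first standard basis vector of Aⁿ. Then for every vector v ∈ Aⁿ there exists a unique matrix Φ ∈ M_n(A) such that Φ Σ = Σ^q Φ and Φ e₁ = v; equivalently, the map Φ ↦ Φ e₁ is a bijection from {Φ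 ∈ M_n(A) : Φ Σ = Σ^q Φ} onto Aⁿ. -/
open Polynomial Matrix

/-- Matrices are equal if all their columns (images of standard basis vectors) agree. -/
private lemma eucl_ext_col {A : Type*} [CommRing A] {n : ℕ}
    {M N : Matrix (Fin n) (Fin n) A}
    (h : ∀ j, M.mulVec (Pi.single j 1) = N.mulVec (Pi.single j 1)) : M = N := by
  ext i j
  have := congrFun (h j) i
  simpa using this

private lemma eucl_comm_pow {A : Type*} [CommRing A] {n : ℕ}
    {Φ S T : Matrix (Fin n) (Fin n) A} (h : Φ * S = T * Φ) (k : ℕ) :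
    Φ * S ^ k = T ^ k * Φ := by
  induction k with
  | zero => simp
  | succ k ih => rw [pow_succ, pow_succ, ← mul_assoc, ih, mul_assoc, h, ← mul_assoc]

private lemma eucl_comm_aeval {A : Type*} [CommRing A] {n : ℕ}
    {Φ S T : Matrix (Fin n) (Fin n) A} (h : Φ * S = T * Φ) (p : A[X]) :
    Φ * aeval S p = aeval T p * Φ := by
  induction p using Polynomial.induction_on' with
  | add p q hp hq => rw [map_add, map_add, mul_add, add_mul, hp, hq]
  | monomial k c =>
      rw [aeval_monomial, aeval_monomial, Algebra.algebraMap_eq_smul_one]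
      rw [smul_mul_assoc, one_mul, smul_mul_assoc, one_mul,
        mul_smul_comm, smul_mul_assoc, eucl_comm_pow h]

/-- If the polynomial `(X - a₁)⋯(X - aₙ)` is invariant under the `q`-power map on its roots and
`Σ` is the matrix with the `aᵢ` on the diagonal and `1` on the subdiagonal, then for each vector
`v` there is a unique matrix `Φ` with `Φ Σ = Σ^q Φ` and `Φ e₁ = v`. -/
theorem exists_unique_commuting_lift
    {A : Type*} [CommRing A] (n : ℕ) (hn : 1 ≤ n) (q : ℕ) (hq : 1 ≤ q)
    (a : Fin n → A)
    (hpoly : (∏ i : Fin n, (Polynomial.X - Polynomial.C (a i)))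
      = ∏ i : Fin n, (Polynomial.X - Polynomial.C (a i ^ q)))
    (S : Matrix (Fin n) (Fin n) A)
    (hS : S = Matrix.of fun i j : Fin n =>
      if i = j then a i else if (i : ℕ) = (j : ℕ) + 1 then 1 else 0)
    (v : Fin n → A) :
    ∃! Φ : Matrix (Fin n) (Fin n) A,
      Φ * S = S ^ q * Φ ∧ Φ.mulVec (Pi.single (⟨0, hn⟩ : Fin n) 1) = v := by

  classical
  set e₀ : Fin n → A := Pi.single (⟨0, hn⟩ : Fin n) 1 with he₀
  set a' : ℕ → A := fun i => if h : i < n then a ⟨i, h⟩ else 0 with ha'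
  have ha'eq : ∀ i : Fin n, a' (i : ℕ) = a i := by
    intro i; simp [ha', i.isLt]
  set g : ℕ → A[X] := fun k => ∏ i ∈ Finset.range k, (X - C (a' i)) with hg
  have hgsucc : ∀ k : ℕ, g (k + 1) = (X - C (a' k)) * g k := by
    intro k
    simp only [hg]
    rw [Finset.prod_range_succ, mul_comm]
  have hg0 : g 0 = 1 := by simp [hg]
  -- columns of S
  have hcolS : ∀ k : Fin n, S.mulVec (Pi.single k (1 : A)) =
      a k • (Pi.single k (1 : A) : Fin n → A) +
        (if h : (k : ℕ) + 1 < n then (Pi.single (⟨(k : ℕ) + 1, h⟩ : Fin n) (1 : A) : Fin n → A) else (0 : Fin n → A)) := by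
    intro k
    funext i
    rw [hS]
    by_cases h : (k : ℕ) + 1 < n
    · rw [dif_pos h]
      simp only [Matrix.mulVec_single, Matrix.of_apply, Pi.add_apply, Pi.smul_apply,
        Pi.single_apply, smul_eq_mul, mul_one]
      have hik : (i = k) ↔ ((i : ℕ) = (k : ℕ)) := Fin.ext_iff
      have hik2 : (i = (⟨(k : ℕ) + 1, h⟩ : Fin n)) ↔ ((i : ℕ) = (k : ℕ) + 1) := Fin.ext_iff
      split_ifs <;> simp_all <;> omega
    · rw [dif_neg h]
      simp only [Matrix.mulVec_single, Matrix.of_apply, Pi.add_apply, Pi.smul_apply,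
        Pi.single_apply, smul_eq_mul, mul_one, Pi.zero_apply, add_zero]
      have hik : (i = k) ↔ ((i : ℕ) = (k : ℕ)) := Fin.ext_iff
      split_ifs <;> simp_all <;> omega
  -- basis vectors as polynomials in S applied to e₀
  have he : ∀ k : ℕ, ∀ h : k < n,
      (aeval S (g k)).mulVec e₀ = Pi.single (⟨k, h⟩ : Fin n) (1 : A) := by
    intro k
    induction k with
    | zero =>
        intro h
        rw [hg0, _root_.map_one, Matrix.one_mulVec, he₀]
    | succ k ih =>
        intro h
        have hk : k < n := Nat.lt_of_succ_lt h
        rw [hgsucc k, _root_.map_mul, ← Matrix.mulVec_mulVec, ih hk, map_sub, aeval_X,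
          Matrix.sub_mulVec, hcolS ⟨k, hk⟩]
        rw [dif_pos (show (((⟨k, hk⟩ : Fin n) : ℕ)) + 1 < n from h)]
        have hC : (aeval S (C (a' k))).mulVec (Pi.single (⟨k, hk⟩ : Fin n) (1 : A)) =
            a' k • (Pi.single (⟨k, hk⟩ : Fin n) (1 : A) : Fin n → A) := by
          rw [aeval_C, Algebra.algebraMap_eq_smul_one, Matrix.smul_mulVec,
            Matrix.one_mulVec]
        rw [hC, ha'eq ⟨k, hk⟩]
        abel
  -- g n kills e₀
  have hgn0 : (aeval S (g n)).mulVec e₀ = 0 := by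
    obtain ⟨m, rfl⟩ : ∃ m, n = m + 1 := ⟨n - 1, by omega⟩
    have hm : m < m + 1 := Nat.lt_succ_self m
    rw [hgsucc m, _root_.map_mul, ← Matrix.mulVec_mulVec, he m hm, map_sub, aeval_X,
      Matrix.sub_mulVec, hcolS ⟨m, hm⟩]
    rw [dif_neg (by simp)]
    have hC : (aeval S (C (a' m))).mulVec (Pi.single (⟨m, hm⟩ : Fin (m + 1)) (1 : A)) =
        a' m • (Pi.single (⟨m, hm⟩ : Fin (m + 1)) (1 : A) : Fin (m + 1) → A) := by
      rw [aeval_C, Algebra.algebraMap_eq_smul_one, Matrix.smul_mulVec,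
        Matrix.one_mulVec]
    rw [hC, ha'eq ⟨m, hm⟩]
    abel
  have hsingle : ∀ j : Fin n, (Pi.single j (1 : A) : Fin n → A) = (aeval S (g (j : ℕ))).mulVec e₀ := by
    intro j
    rw [he (j : ℕ) j.isLt]
  -- g n kills everything
  have haevalgn : aeval S (g n) = 0 := by
    apply eucl_ext_col
    intro j
    rw [Matrix.zero_mulVec, hsingle j, Matrix.mulVec_mulVec, ← _root_.map_mul,
      mul_comm (g n) (g (j : ℕ)), _root_.map_mul, ← Matrix.mulVec_mulVec, hgn0,
      Matrix.mulVec_zero]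
  -- rewrite hpoly in terms of a'
  have hpoly' : g n = ∏ i ∈ Finset.range n, (X - C (a' i ^ q)) := by
    have h1 : (∏ i ∈ Finset.range n, (X - C (a' i))) = ∏ i : Fin n, (X - C (a i)) := by
      rw [← Fin.prod_univ_eq_prod_range (fun i => X - C (a' i)) n]
      exact Finset.prod_congr rfl fun i _ => by rw [ha'eq]
    have h2 : (∏ i ∈ Finset.range n, (X - C (a' i ^ q))) =
        ∏ i : Fin n, (X - C (a i ^ q)) := by
      rw [← Fin.prod_univ_eq_prod_range (fun i => X - C (a' i ^ q)) n]
      exact Finset.prod_congr rfl fun i _ => by rw [ha'eq]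
    simp only [hg]
    rw [h1, h2, hpoly]
  -- key vanishing
  have hkey : aeval (S ^ q) (g n) = 0 := by
    set H : A[X] := ∏ i ∈ Finset.range n, (X ^ q - C (a' i ^ q)) with hH
    have hdvd : g n ∣ H := by
      rw [hg, hH]
      apply Finset.prod_dvd_prod_of_dvd
      intro i _
      have := Polynomial.X_sub_C_dvd_sub_C_eval (a := a' i) (p := (X : A[X]) ^ q)
      simpa using this
    have hHzero : aeval S H = 0 := by
      obtain ⟨r, hr⟩ := hdvd
      rw [hr, _root_.map_mul, haevalgn, zero_mul]
    have heq : aeval (S ^ q) (g n) = aeval S ((g n).comp (X ^ q)) := by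
      rw [aeval_comp, map_pow, aeval_X]
    have hcomp : (g n).comp (X ^ q) = H := by
      rw [hpoly', hH, Polynomial.prod_comp]
      apply Finset.prod_congr rfl
      intro i _
      simp [Polynomial.sub_comp]
    rw [heq, hcomp, hHzero]
  -- the candidate Φ
  set Φ : Matrix (Fin n) (Fin n) A :=
    Matrix.of (fun i j => ((aeval (S ^ q) (g (j : ℕ))).mulVec v) i) with hΦ
  have hΦcol : ∀ j : Fin n, Φ.mulVec (Pi.single j 1) = (aeval (S ^ q) (g (j : ℕ))).mulVec v := by
    intro j
    funext i
    simp [hΦ]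
  have hΦe₀ : Φ.mulVec e₀ = v := by
    have h0 := hΦcol ⟨0, hn⟩
    rw [he₀, h0]
    simp only [Fin.val_mk, hg0, _root_.map_one, Matrix.one_mulVec]
  have hXg : ∀ k : ℕ, (X : A[X]) * g k = g (k + 1) + C (a' k) * g k := by
    intro k
    rw [hgsucc k]
    ring
  have hΦcomm : Φ * S = S ^ q * Φ := by
    apply eucl_ext_col
    intro j
    rw [← Matrix.mulVec_mulVec, ← Matrix.mulVec_mulVec, hcolS j,
      Matrix.mulVec_add, Matrix.mulVec_smul, hΦcol j]
    rw [Matrix.mulVec_mulVec v (S ^ q) (aeval (S ^ q) (g (j : ℕ)))]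
    have hSq : S ^ q * aeval (S ^ q) (g (j : ℕ)) = aeval (S ^ q) (X * g (j : ℕ)) := by
      rw [_root_.map_mul, aeval_X]
    rw [hSq, hXg, map_add, _root_.map_mul, aeval_C, Algebra.algebraMap_eq_smul_one,
      smul_mul_assoc, one_mul, Matrix.add_mulVec, Matrix.smul_mulVec, ha'eq j]
    by_cases h : (j : ℕ) + 1 < n
    · rw [dif_pos h]
      have := hΦcol ⟨(j : ℕ) + 1, h⟩
      rw [this]
      rw [add_comm]
    · rw [dif_neg h]
      have hjn : (j : ℕ) + 1 = n := by have := j.isLt; omega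
      rw [Matrix.mulVec_zero, hjn, hkey, Matrix.zero_mulVec, zero_add, add_zero]
  refine ⟨Φ, ⟨hΦcomm, hΦe₀⟩, ?_⟩
  rintro Ψ ⟨hΨcomm, hΨe₀⟩
  apply eucl_ext_col
  intro j
  rw [hΦcol j, hsingle j, Matrix.mulVec_mulVec, eucl_comm_aeval hΨcomm,
    ← Matrix.mulVec_mulVec, hΨe₀]
end

section
/- Let C be an algebraically closed field, let n ≥ 1 and q ≥ 2 be integers, and let g, h ∈ GL_n(C) satisfy h g h⁻¹ = g^q. Then (g^{q^{n!} − 1} − 1)^n = 0 in M_n(C). -/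
/-!
Conjugation does not change the spectrum, so `h g h⁻¹ = g ^ q` makes the `q`-th power map a
surjection, hence a permutation, of the at most `n` eigenvalues of `g`. The order of this
permutation divides `n!`, so every eigenvalue `μ` satisfies `μ ^ q ^ n! = μ`, i.e. (as `μ ≠ 0`)
`μ ^ (q ^ n! - 1) = 1`. Thus `g ^ (q ^ n! - 1) - 1` has only the eigenvalue `0`; over an
algebraically closed field its characteristic polynomial is then `X ^ n`, and Cayley–Hamilton
finishes the proof.
-/

open Polynomial

theorem Set.Finite.iterate_factorial_apply_eq_of_image_eq {α : Type*} {f : α → α} {s : Set α}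
    (hs : s.Finite) (hf : f '' s = s) {n : ℕ} (hn : s.ncard ≤ n) {x : α} (hx : x ∈ s) :
    f^[n.factorial] x = x := by
  have hmaps : Set.MapsTo f s s := fun y hy => hf ▸ Set.mem_image_of_mem f hy
  have hbij : Set.BijOn f s s :=
    (hs.surjOn_iff_bijOn_of_mapsTo hmaps).mp (by rw [Set.SurjOn, hf])
  have : Finite s := hs
  have hσ : hbij.equiv ^ n.factorial = 1 := by
    obtain ⟨k, hk⟩ := Nat.factorial_dvd_factorial hn
    rw [hk, pow_mul, ← Nat.card_coe_set_eq, ← Nat.card_perm, pow_card_eq_one', one_pow]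
  have := congrArg (fun σ : Equiv.Perm s => (σ ⟨x, hx⟩ : α)) hσ
  simpa only [Equiv.Perm.coe_pow, Set.BijOn.equiv, Equiv.coe_ofBijective,
    Set.MapsTo.iterate_restrict, Set.MapsTo.val_restrict_apply, Equiv.Perm.one_apply] using this

theorem spectrum.image_pow_eq_of_conj_eq_pow {𝕜 A : Type*} [Field 𝕜] [Ring A] [Algebra 𝕜 A]
    [IsAlgClosed 𝕜] {a : A} {u : Aˣ} {q : ℕ} (hq : 0 < q) (hconj : u * a * ↑u⁻¹ = a ^ q) :
    (· ^ q) '' spectrum 𝕜 a = spectrum 𝕜 a := by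
  rw [← spectrum.map_pow_of_pos a hq, ← hconj, spectrum.units_conjugate]

theorem spectrum.pow_sub_one_subset_zero {𝕜 A : Type*} [Field 𝕜] [Ring A] [Algebra 𝕜 A]
    [IsAlgClosed 𝕜] {a : A} {N : ℕ} (hN : 0 < N) (h : ∀ μ ∈ spectrum 𝕜 a, μ ^ N = 1) :
    spectrum 𝕜 (a ^ N - 1) ⊆ {0} := by
  rw [← map_one (algebraMap 𝕜 A), ← spectrum.sub_singleton_eq, spectrum.map_pow_of_pos a hN]
  rintro _ ⟨_, ⟨μ, hμ, rfl⟩, _, rfl, rfl⟩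
  simp [h μ hμ]

section Matrix

variable {n K : Type*} [Fintype n] [DecidableEq n] [Field K]

theorem Matrix.ncard_spectrum_le (A : Matrix n n K) :
    (spectrum K A).ncard ≤ Fintype.card n := by
  classical
  have hS : spectrum K A = ↑A.charpoly.roots.toFinset := by
    ext μ
    simp [Matrix.mem_spectrum_iff_isRoot_charpoly, A.charpoly_monic.ne_zero]
  calc (spectrum K A).ncard = A.charpoly.roots.toFinset.card := by rw [hS, Set.ncard_coe_finset]
    _ ≤ Multiset.card A.charpoly.roots := Multiset.toFinset_card_le _
    _ ≤ A.charpoly.natDegree := card_roots' _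
    _ = Fintype.card n := A.charpoly_natDegree_eq_dim

theorem Matrix.charpoly_eq_X_pow_of_spectrum_subset_zero [IsAlgClosed K] {M : Matrix n n K}
    (h : spectrum K M ⊆ {0}) : M.charpoly = X ^ Fintype.card n := by
  have hsplits : M.charpoly.Splits := IsAlgClosed.splits _
  have hroots : M.charpoly.roots = Multiset.replicate (Fintype.card n) 0 := by
    refine Multiset.eq_replicate.mpr ⟨?_, fun μ hμ => ?_⟩
    · rw [splits_iff_card_roots.mp hsplits, M.charpoly_natDegree_eq_dim]
    · rw [mem_roots M.charpoly_monic.ne_zero, ← Matrix.mem_spectrum_iff_isRoot_charpoly] at hμ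
      exact h hμ
  rw [hsplits.eq_prod_roots_of_monic M.charpoly_monic, hroots]
  simp

theorem Matrix.pow_card_eq_zero_of_spectrum_subset_zero [IsAlgClosed K] {M : Matrix n n K}
    (h : spectrum K M ⊆ {0}) : M ^ Fintype.card n = 0 := by
  simpa [Matrix.charpoly_eq_X_pow_of_spectrum_subset_zero h] using M.aeval_self_charpoly

end Matrix

theorem nilpotent_of_qPower_conjugate_general
    {C : Type*} [Field C] [IsAlgClosed C]
    (n : ℕ) (q : ℕ) (hq : 2 ≤ q)
    (g h : GL (Fin n) C) (hconj : h * g * h⁻¹ = g ^ q) :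
    ((g : Matrix (Fin n) (Fin n) C) ^ (q ^ (n.factorial) - 1)
      - (1 : Matrix (Fin n) (Fin n) C)) ^ n = 0 := by
  set A : Matrix (Fin n) (Fin n) C := (g : Matrix (Fin n) (Fin n) C)
  have hS : (· ^ q) '' spectrum C A = spectrum C A :=
    spectrum.image_pow_eq_of_conj_eq_pow (by omega) (by simpa using congrArg Units.val hconj)
  have hq_pow : 2 ≤ q ^ n.factorial := hq.trans (Nat.le_self_pow n.factorial_ne_zero q)
  have hroot : ∀ μ ∈ spectrum C A, μ ^ (q ^ n.factorial - 1) = 1 := by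
    intro μ hμ
    have hμ0 : μ ≠ 0 := fun h0 => (spectrum.zero_mem_iff C).mp (h0 ▸ hμ) g.isUnit
    have hfix : μ ^ q ^ n.factorial = μ := by
      simpa only [pow_iterate] using A.finite_spectrum.iterate_factorial_apply_eq_of_image_eq hS
        (by simpa using A.ncard_spectrum_le) hμ
    rw [pow_sub₀ μ hμ0 (by omega), hfix, pow_one, mul_inv_cancel₀ hμ0]
  simpa using Matrix.pow_card_eq_zero_of_spectrum_subset_zero
    (spectrum.pow_sub_one_subset_zero (by omega) hroot)

/-- If `h g h⁻¹ = g^q` in `GL_n` over an algebraically closed field, then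
`(g^{q^{n!} - 1} - 1)^n = 0`. -/
theorem nilpotent_of_qPower_conjugate
    {C : Type*} [Field C] [IsAlgClosed C]
    (n : ℕ) (hn : 1 ≤ n) (q : ℕ) (hq : 2 ≤ q)
    (g h : GL (Fin n) C) (hconj : h * g * h⁻¹ = g ^ q) :
    ((g : Matrix (Fin n) (Fin n) C) ^ (q ^ (n.factorial) - 1)
      - (1 : Matrix (Fin n) (Fin n) C)) ^ n = 0 :=
  nilpotent_of_qPower_conjugate_general n q hq g h hconj
end

section
/- Let A be a commutative local ring with maximal ideal 𝔪 and residue field F = A/𝔪, let m ≥ 1, let M ∈ M_m(A), and let P ∈ A[X]. If the reduction P̄ ∈ F[X] of P and the characteristic polynomial of the reduction M̄ ∈ M_m(F) of M are coprime in F[X] (i.e., generate the unit ideal), then P(M) is an invertible matrix in M_m(A). -/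
open IsLocalRing

lemma aeval_map_residue_matrix
    {A : Type*} [CommRing A] [IsLocalRing A]
    (m : ℕ) (M : Matrix (Fin m) (Fin m) A) (P : Polynomial A) :
    (Polynomial.aeval M P).map (residue A)
      = Polynomial.aeval (M.map (residue A)) (P.map (residue A)) := by
  have : (M.map (residue A)) = (residue A).mapMatrix M := rfl
  rw [this, ← ResidueField.algebraMap_eq, Polynomial.aeval_map_algebraMap]
  show (residue A).mapMatrix (Polynomial.aeval M P) = _
  rw [Polynomial.aeval_def, Polynomial.aeval_def, Polynomial.hom_eval₂]
  congr 1
  ext a i j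
  by_cases h : i = j <;>
    simp [Matrix.algebraMap_matrix_apply, ResidueField.algebraMap_eq, h]

/-- Over a local ring, if the reduction of `P` is coprime to the characteristic polynomial of
the reduction of `M`, then `P(M)` is invertible. -/
theorem isUnit_aeval_of_coprime_charpoly
    {A : Type*} [CommRing A] [IsLocalRing A]
    (m : ℕ) (hm : 1 ≤ m) (M : Matrix (Fin m) (Fin m) A) (P : Polynomial A)
    (hcop : IsCoprime (P.map (residue A))
      (Matrix.charpoly (M.map (residue A)))) :
    IsUnit (Polynomial.aeval M P) := by
  rw [Matrix.isUnit_iff_isUnit_det, ← residue_ne_zero_iff_isUnit]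
  -- reduce to the residue field
  obtain ⟨a, b, hab⟩ := hcop
  have hkey : IsUnit (Polynomial.aeval (M.map (residue A)) (P.map (residue A))) := by
    have h1 : Polynomial.aeval (M.map (residue A)) a
        * Polynomial.aeval (M.map (residue A)) (P.map (residue A)) = 1 := by
      have := congrArg (Polynomial.aeval (M.map (residue A))) hab
      simpa [Matrix.aeval_self_charpoly] using this
    have h2 : Polynomial.aeval (M.map (residue A)) (P.map (residue A))
        * Polynomial.aeval (M.map (residue A)) a = 1 := by
      rw [← map_mul, mul_comm, map_mul]; exact h1
    exact ⟨⟨_, _, h2, h1⟩, rfl⟩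
  rw [Matrix.isUnit_iff_isUnit_det] at hkey
  have hdet : residue A (Polynomial.aeval M P).det
      = (Polynomial.aeval (M.map (residue A)) (P.map (residue A))).det := by
    rw [← aeval_map_residue_matrix, RingHom.map_det]
    rfl
  rw [hdet]
  exact hkey.ne_zero
end
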